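/- arXiv:1203.5505 — 2 statements merged into one kernel-verified Lean document; each statement's English description precedes it below -/
import Mathlib

section
/- Let a,b,c ≥ 2, L = L(a,b,c), c⃗ the canonical element, and ω = c⃗ − (x₁ + x₂ + x₃) the dualizing element. Then for every y ∈ L exactly one of the following holds: y ≥ 0, or y ≤ c⃗ + ω. Equivalently: y is not ≥ 0 if and only if y ≤ c⃗ + ω (where u ≤ v means v − u lies in the positive cone generated by x₁,x₂,x₃). -/
/-- The subgroup of relations defining L(a,b,c). -/
def LRel (a b c : ℕ) : AddSubgroup (ℤ × ℤ × ℤ) :=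
  AddSubgroup.closure {((a : ℤ), -(b : ℤ), 0), ((0 : ℤ), (b : ℤ), -(c : ℤ))}

/-- The rank-one abelian group L(a,b,c) on generators x₁,x₂,x₃ with a·x₁ = b·x₂ = c·x₃. -/
abbrev LGrp (a b c : ℕ) := (ℤ × ℤ × ℤ) ⧸ LRel a b c

def Lx1 (a b c : ℕ) : LGrp a b c := QuotientAddGroup.mk (1, 0, 0)
def Lx2 (a b c : ℕ) : LGrp a b c := QuotientAddGroup.mk (0, 1, 0)
def Lx3 (a b c : ℕ) : LGrp a b c := QuotientAddGroup.mk (0, 0, 1)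

/-- Canonical element c⃗ = a·x₁. -/
def Lcan (a b c : ℕ) : LGrp a b c := (a : ℤ) • Lx1 a b c

/-- Dualizing element ω = c⃗ − (x₁+x₂+x₃). -/
def Lomega (a b c : ℕ) : LGrp a b c :=
  Lcan a b c - (Lx1 a b c + Lx2 a b c + Lx3 a b c)

/-- Dominant element δ⃗ = c⃗ + 2ω. -/
def Ldelta (a b c : ℕ) : LGrp a b c := Lcan a b c + (2 : ℤ) • Lomega a b c

/-- The partial order on L given by the positive cone ℕx₁+ℕx₂+ℕx₃ : u ≤ v iff v−u ∈ ℕx₁+ℕx₂+ℕx₃. -/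
def Lle (a b c : ℕ) (u v : LGrp a b c) : Prop :=
  ∃ n1 n2 n3 : ℕ,
    v - u = (n1 : ℤ) • Lx1 a b c + (n2 : ℤ) • Lx2 a b c + (n3 : ℤ) • Lx3 a b c
/-!
Every element of L(a,b,c) has a normal form ℓ x₁ + l₂ x₂ + l₃ x₃ with 0 ≤ l₂ < b and
0 ≤ l₃ < c; for the class of (p, q, r) the coefficient is ℓ = p + a⌊q/b⌋ + a⌊r/c⌋, which does not
depend on the representative. Since b x₂ = c x₃ = a x₁, an element is ≥ 0 exactly when ℓ ≥ 0.
Finally c⃗ + ω is the class of (2a − 1, −1, −1), and y ↦ c⃗ + ω − y turns ℓ into −1 − ℓ, so exactly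
one of y and c⃗ + ω − y is ≥ 0.
-/

lemma mem_LRel_iff {a b c : ℕ} {w : ℤ × ℤ × ℤ} :
    w ∈ LRel a b c ↔ ∃ s t : ℤ, w = (s * a, (t - s) * b, -(t * c)) := by
  rw [LRel, AddSubgroup.mem_closure_pair]
  constructor <;> rintro ⟨s, t, rfl⟩ <;> exact ⟨s, t, by ext <;> simp; ring⟩

lemma zsmul_Lx_add_eq_mk (a b c : ℕ) (m₁ m₂ m₃ : ℤ) :
    m₁ • Lx1 a b c + m₂ • Lx2 a b c + m₃ • Lx3 a b c = ((m₁, m₂, m₃) : ℤ × ℤ × ℤ) := by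
  simp only [Lx1, Lx2, Lx3, ← QuotientAddGroup.mk_zsmul, ← QuotientAddGroup.mk_add]
  simp

lemma Lcan_add_Lomega (a b c : ℕ) :
    Lcan a b c + Lomega a b c = ((2 * a - 1, -1, -1) : ℤ × ℤ × ℤ) := by
  simp only [Lcan, Lomega, Lx1, Lx2, Lx3, ← QuotientAddGroup.mk_zsmul,
    ← QuotientAddGroup.mk_add, ← QuotientAddGroup.mk_sub]
  congr 1
  ext <;> simp; ring

lemma zero_Lle_sub_iff {a b c : ℕ} {u v : LGrp a b c} : Lle a b c 0 (v - u) ↔ Lle a b c u v := by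
  simp only [Lle, sub_zero]

def normalCoeff (a b c : ℕ) (w : ℤ × ℤ × ℤ) : ℤ :=
  w.1 + a * (w.2.1 / b) + a * (w.2.2 / c)

lemma normalCoeff_add_of_mem_LRel {a b c : ℕ} (hb : 0 < b) (hc : 0 < c) (w : ℤ × ℤ × ℤ)
    {r : ℤ × ℤ × ℤ} (hr : r ∈ LRel a b c) : normalCoeff a b c (w + r) = normalCoeff a b c w := by
  obtain ⟨s, t, rfl⟩ := mem_LRel_iff.mp hr
  have hdivb := Int.add_mul_ediv_right w.2.1 (t - s) (c := b) (by omega)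
  have hdivc := Int.add_mul_ediv_right w.2.2 (-t) (c := c) (by omega)
  simp only [normalCoeff, Prod.fst_add, Prod.snd_add, ← neg_mul, hdivb, hdivc]
  ring

lemma mk_eq_mk_normalForm (a b c : ℕ) (w : ℤ × ℤ × ℤ) :
    (w : LGrp a b c) = ((normalCoeff a b c w, w.2.1 % b, w.2.2 % c) : ℤ × ℤ × ℤ) := by
  rw [QuotientAddGroup.eq, mem_LRel_iff]
  refine ⟨w.2.1 / b + w.2.2 / c, w.2.2 / c, ?_⟩
  obtain ⟨p, q, r⟩ := w
  simp only [normalCoeff, Prod.neg_mk, Prod.mk_add_mk, Prod.mk.injEq]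
  refine ⟨by ring, ?_, ?_⟩
  · linear_combination Int.emod_add_mul_ediv q b
  · linear_combination Int.emod_add_mul_ediv r c

lemma zero_Lle_mk_iff {a b c : ℕ} (hb : 0 < b) (hc : 0 < c) (w : ℤ × ℤ × ℤ) :
    Lle a b c 0 w ↔ 0 ≤ normalCoeff a b c w := by
  simp only [Lle, sub_zero, zsmul_Lx_add_eq_mk]
  constructor
  · rintro ⟨n₁, n₂, n₃, hw⟩
    rw [← normalCoeff_add_of_mem_LRel hb hc w (QuotientAddGroup.eq.mp hw), add_neg_cancel_left,
      normalCoeff]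
    positivity
  · intro hw
    have hb' : (b : ℤ) ≠ 0 := by omega
    have hc' : (c : ℤ) ≠ 0 := by omega
    refine ⟨(normalCoeff a b c w).toNat, (w.2.1 % b).toNat, (w.2.2 % c).toNat, ?_⟩
    rw [mk_eq_mk_normalForm, Int.toNat_of_nonneg hw, Int.toNat_of_nonneg (Int.emod_nonneg _ hb'),
      Int.toNat_of_nonneg (Int.emod_nonneg _ hc')]

lemma neg_one_sub_ediv {b : ℤ} (hb : 0 < b) (q : ℤ) : (-1 - q) / b = -(q / b) - 1 := by
  have h := Int.emod_add_mul_ediv q b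
  have h₁ := Int.emod_nonneg q hb.ne'
  have h₂ := Int.emod_lt_of_pos q hb
  exact ((Int.ediv_emod_unique (r := b - 1 - q % b) hb).mpr
    ⟨by linarith, by linarith, by linarith⟩).1

lemma normalCoeff_reflect {a b c : ℕ} (hb : 0 < b) (hc : 0 < c) (w : ℤ × ℤ × ℤ) :
    normalCoeff a b c (((2 * a - 1, -1, -1) : ℤ × ℤ × ℤ) - w) = -1 - normalCoeff a b c w := by
  simp only [normalCoeff, Prod.fst_sub, Prod.snd_sub, neg_one_sub_ediv (Int.natCast_pos.mpr hb),
    neg_one_sub_ediv (Int.natCast_pos.mpr hc)]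
  ring

theorem not_nonneg_iff_le_can_add_omega_general (a b c : ℕ) (hb : 2 ≤ b) (hc : 2 ≤ c)
    (y : LGrp a b c) :
    ¬ Lle a b c 0 y ↔ Lle a b c y (Lcan a b c + Lomega a b c) := by
  have hb₀ : 0 < b := by omega
  have hc₀ : 0 < c := by omega
  induction y using QuotientAddGroup.induction_on with
  | H w =>
    rw [← zero_Lle_sub_iff (v := Lcan a b c + Lomega a b c), Lcan_add_Lomega,
      ← QuotientAddGroup.mk_sub, zero_Lle_mk_iff hb₀ hc₀, zero_Lle_mk_iff hb₀ hc₀,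
      normalCoeff_reflect hb₀ hc₀]
    omega

/-- L is almost linearly ordered: y is not ≥ 0 if and only if y ≤ c⃗ + ω. -/
theorem not_nonneg_iff_le_can_add_omega (a b c : ℕ) (ha : 2 ≤ a) (hb : 2 ≤ b) (hc : 2 ≤ c)
    (y : LGrp a b c) :
    ¬ Lle a b c 0 y ↔ Lle a b c y (Lcan a b c + Lomega a b c) :=
  not_nonneg_iff_le_can_add_omega_general a b c hb hc y
end

section
/- Let a,b,c ≥ 2 and L = L(a,b,c). The number of elements x ∈ L with 0 ≤ x ≤ δ⃗ (where δ⃗ = (a−2)x₁+(b−2)x₂+(c−2)x₃ is the dominant element and ≤ is given by the cone ℕx₁+ℕx₂+ℕx₃) equals (a−1)(b−1)(c−1). -/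
lemma mem_LRel (a b c : ℕ) (v : ℤ × ℤ × ℤ) :
    v ∈ LRel a b c ↔ ∃ k l : ℤ, v = (k * a, l * b - k * b, -(l * c)) := by
  rw [LRel, AddSubgroup.mem_closure_pair]
  constructor
  · rintro ⟨m, n, rfl⟩
    exact ⟨m, n, by simp [Prod.ext_iff, mul_comm]; ring⟩
  · rintro ⟨k, l, rfl⟩
    exact ⟨k, l, by simp [Prod.ext_iff, mul_comm]; ring⟩

lemma smul_mk (a b c : ℕ) (n : ℤ) (v : ℤ × ℤ × ℤ) :
    n • (QuotientAddGroup.mk v : LGrp a b c) = QuotientAddGroup.mk (n • v) :=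
  (map_zsmul (QuotientAddGroup.mk' (LRel a b c)) n v).symm

lemma mk_eq_mk (a b c : ℕ) (u v : ℤ × ℤ × ℤ) :
    (QuotientAddGroup.mk u : LGrp a b c) = QuotientAddGroup.mk v ↔ u - v ∈ LRel a b c := by
  rw [QuotientAddGroup.eq, ← AddSubgroup.neg_mem_iff]
  simp [neg_add_rev, sub_eq_add_neg, add_comm]

lemma lin_comb (a b c : ℕ) (n1 n2 n3 : ℤ) :
    (n1 : ℤ) • Lx1 a b c + (n2 : ℤ) • Lx2 a b c + (n3 : ℤ) • Lx3 a b c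
      = QuotientAddGroup.mk (n1, n2, n3) := by
  rw [Lx1, Lx2, Lx3, smul_mk, smul_mk, smul_mk]
  rw [show (QuotientAddGroup.mk : ℤ×ℤ×ℤ → LGrp a b c) = QuotientAddGroup.mk' (LRel a b c) from rfl]
  rw [← map_add, ← map_add]
  congr 1
  simp [Prod.ext_iff]

lemma lle_mk (a b c : ℕ) (u v : ℤ × ℤ × ℤ) :
    Lle a b c (QuotientAddGroup.mk u) (QuotientAddGroup.mk v) ↔
      ∃ n1 n2 n3 : ℕ, (v - u - ((n1 : ℤ), (n2 : ℤ), (n3 : ℤ))) ∈ LRel a b c := by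
  unfold Lle
  have hsub : (QuotientAddGroup.mk v : LGrp a b c) - QuotientAddGroup.mk u
      = QuotientAddGroup.mk (v - u) :=
    (map_sub (QuotientAddGroup.mk' (LRel a b c)) v u).symm
  rw [hsub]
  constructor
  · rintro ⟨n1, n2, n3, h⟩
    rw [lin_comb, mk_eq_mk] at h
    exact ⟨n1, n2, n3, h⟩
  · rintro ⟨n1, n2, n3, h⟩
    exact ⟨n1, n2, n3, by rw [lin_comb, mk_eq_mk]; exact h⟩

lemma Ldelta_eq (a b c : ℕ) :
    Ldelta a b c = QuotientAddGroup.mk ((3 * a - 2 : ℤ), -2, -2) := by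
  rw [Ldelta, Lomega, Lcan, Lx1, Lx2, Lx3, smul_mk]
  rw [show (QuotientAddGroup.mk : ℤ×ℤ×ℤ → LGrp a b c) = QuotientAddGroup.mk' (LRel a b c) from rfl]
  rw [← map_add, ← map_add, ← map_sub, ← map_zsmul, ← map_add]
  congr 1
  simp [Prod.ext_iff]
  ring

lemma zero_mk (a b c : ℕ) : (0 : LGrp a b c) = QuotientAddGroup.mk 0 := rfl

/-- Reduction to a canonical representative with first two coords small. -/
lemma reduce (a b c : ℕ) (ha : 0 < a) (hb : 0 < b) (n1 n2 n3 : ℕ) :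
    ∃ r1 r2 r3 : ℕ, r1 < a ∧ r2 < b ∧
      (QuotientAddGroup.mk ((n1 : ℤ), (n2 : ℤ), (n3 : ℤ)) : LGrp a b c)
        = QuotientAddGroup.mk ((r1 : ℤ), (r2 : ℤ), (r3 : ℤ)) := by
  obtain ⟨q1, r1, hr1, e1⟩ : ∃ q r : ℕ, r < a ∧ n1 = q * a + r :=
    ⟨n1 / a, n1 % a, Nat.mod_lt _ ha, by rw [mul_comm]; exact (Nat.div_add_mod n1 a).symm⟩
  obtain ⟨q2, r2, hr2, e2⟩ : ∃ q r : ℕ, r < b ∧ n2 + q1 * b = q * b + r :=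
    ⟨(n2 + q1 * b) / b, (n2 + q1 * b) % b, Nat.mod_lt _ hb,
      by rw [mul_comm ((n2 + q1 * b) / b) b]; exact (Nat.div_add_mod _ b).symm⟩
  refine ⟨r1, r2, n3 + q2 * c, hr1, hr2, ?_⟩
  rw [mk_eq_mk, mem_LRel]
  refine ⟨(q1 : ℤ), (q2 : ℤ), ?_⟩
  have E1 : (n1 : ℤ) = q1 * a + r1 := by exact_mod_cast e1
  have E2 : (n2 : ℤ) + q1 * b = q2 * b + r2 := by exact_mod_cast e2
  simp only [Prod.mk_sub_mk, Prod.mk.injEq]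
  refine ⟨?_, ?_, ?_⟩ <;> push_cast <;> linarith

/-- The interval 0 ≤ x ≤ δ⃗ in L(a,b,c) has exactly (a−1)(b−1)(c−1) elements. -/
theorem card_dominant_interval (a b c : ℕ) (ha : 2 ≤ a) (hb : 2 ≤ b) (hc : 2 ≤ c) :
    Nat.card {x : LGrp a b c // Lle a b c 0 x ∧ Lle a b c x (Ldelta a b c)} =
      (a - 1) * (b - 1) * (c - 1) := by
  have ha' : (0:ℤ) < a := by exact_mod_cast Nat.lt_of_lt_of_le Nat.zero_lt_two ha
  have hb' : (0:ℤ) < b := by exact_mod_cast Nat.lt_of_lt_of_le Nat.zero_lt_two hb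
  have hc' : (0:ℤ) < c := by exact_mod_cast Nat.lt_of_lt_of_le Nat.zero_lt_two hc
  have ha2 : (2:ℤ) ≤ a := by exact_mod_cast ha
  have hb2 : (2:ℤ) ≤ b := by exact_mod_cast hb
  have hc2 : (2:ℤ) ≤ c := by exact_mod_cast hc
  -- the map from the box
  set T := {x : LGrp a b c // Lle a b c 0 x ∧ Lle a b c x (Ldelta a b c)} with hT
  have hmem : ∀ i j k : ℕ, i ≤ a - 2 → j ≤ b - 2 → k ≤ c - 2 →
      Lle a b c 0 (QuotientAddGroup.mk ((i:ℤ), (j:ℤ), (k:ℤ))) ∧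
      Lle a b c (QuotientAddGroup.mk ((i:ℤ), (j:ℤ), (k:ℤ))) (Ldelta a b c) := by
    intro i j k hi hj hk
    constructor
    · rw [zero_mk, lle_mk]
      exact ⟨i, j, k, by simp [AddSubgroup.zero_mem]⟩
    · rw [Ldelta_eq, lle_mk]
      refine ⟨a - 2 - i, b - 2 - j, c - 2 - k, ?_⟩
      rw [mem_LRel]
      refine ⟨2, 1, ?_⟩
      have hia : ((a - 2 - i : ℕ) : ℤ) = (a:ℤ) - 2 - i := by omega
      have hjb : ((b - 2 - j : ℕ) : ℤ) = (b:ℤ) - 2 - j := by omega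
      have hkc : ((c - 2 - k : ℕ) : ℤ) = (c:ℤ) - 2 - k := by omega
      simp only [Prod.mk_sub_mk, Prod.mk.injEq]
      refine ⟨?_, ?_, ?_⟩ <;> omega
  let f : Fin (a-1) × Fin (b-1) × Fin (c-1) → T := fun p =>
    ⟨QuotientAddGroup.mk ((p.1 : ℤ), (p.2.1 : ℤ), (p.2.2 : ℤ)),
      hmem p.1 p.2.1 p.2.2 (by omega) (by omega) (by omega)⟩
  have hbij : Function.Bijective f := by
    constructor
    · rintro ⟨⟨i, hi⟩, ⟨j, hj⟩, ⟨k, hk⟩⟩ ⟨⟨i', hi'⟩, ⟨j', hj'⟩, ⟨k', hk'⟩⟩ hf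
      have h : (QuotientAddGroup.mk ((i:ℤ), (j:ℤ), (k:ℤ)) : LGrp a b c)
          = QuotientAddGroup.mk ((i':ℤ), (j':ℤ), (k':ℤ)) := congrArg Subtype.val hf
      rw [mk_eq_mk, mem_LRel] at h
      obtain ⟨m, l, hml⟩ := h
      have e1 : (i:ℤ) - (i':ℤ) = m * a := by
        have := congrArg Prod.fst hml; simpa using this
      have e2 : (j:ℤ) - (j':ℤ) = l * b - m * b := by
        have := congrArg (fun p : ℤ×ℤ×ℤ => p.2.1) hml; simpa using this
      have e3 : (k:ℤ) - (k':ℤ) = -(l * c) := by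
        have := congrArg (fun p : ℤ×ℤ×ℤ => p.2.2) hml; simpa using this
      have bi : (i:ℤ) ≤ a - 2 := by omega
      have bi' : (i':ℤ) ≤ a - 2 := by omega
      have bj : (j:ℤ) ≤ b - 2 := by omega
      have bj' : (j':ℤ) ≤ b - 2 := by omega
      have hi0 : (0:ℤ) ≤ i := Int.natCast_nonneg i
      have hi0' : (0:ℤ) ≤ i' := Int.natCast_nonneg i'
      have hj0 : (0:ℤ) ≤ j := Int.natCast_nonneg j
      have hj0' : (0:ℤ) ≤ j' := Int.natCast_nonneg j'
      have hk0 : (0:ℤ) ≤ k := Int.natCast_nonneg k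
      have hk0' : (0:ℤ) ≤ k' := Int.natCast_nonneg k'
      have hm : m = 0 := by
        have h1 : m * a < 1 * a := by linarith
        have h2 : (-1) * a < m * a := by linarith
        have := lt_of_mul_lt_mul_right h1 (le_of_lt ha')
        have := lt_of_mul_lt_mul_right h2 (le_of_lt ha')
        omega
      subst hm
      have hl : l = 0 := by
        have h1 : l * b < 1 * b := by linarith
        have h2 : (-1) * b < l * b := by linarith
        have := lt_of_mul_lt_mul_right h1 (le_of_lt hb')
        have := lt_of_mul_lt_mul_right h2 (le_of_lt hb')
        omega
      subst hl
      simp only [zero_mul, sub_zero, neg_zero, mul_zero] at e1 e2 e3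
      have hii : i = i' := by omega
      have hjj : j = j' := by omega
      have hkk : k = k' := by omega
      subst hii hjj hkk
      rfl
    · rintro ⟨x, hx0, hxd⟩
      -- representative of x from 0 ≤ x
      rw [zero_mk] at hx0
      obtain ⟨v, rfl⟩ := QuotientAddGroup.mk_surjective x
      rw [lle_mk] at hx0
      obtain ⟨n1, n2, n3, hn⟩ := hx0
      have hxeq : (QuotientAddGroup.mk v : LGrp a b c)
          = QuotientAddGroup.mk ((n1:ℤ), (n2:ℤ), (n3:ℤ)) := by
        rw [mk_eq_mk]
        simpa using hn
      obtain ⟨r1, r2, r3, hr1, hr2, hred⟩ := reduce a b c (by omega) (by omega) n1 n2 n3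
      rw [Ldelta_eq, lle_mk] at hxd
      obtain ⟨p1, p2, p3, hp⟩ := hxd
      obtain ⟨q1, q2, q3, hq1, hq2, hqred⟩ := reduce a b c (by omega) (by omega) p1 p2 p3
      -- x = mk (r1, r2, r3)
      have hx : (QuotientAddGroup.mk v : LGrp a b c)
          = QuotientAddGroup.mk ((r1:ℤ), (r2:ℤ), (r3:ℤ)) := hxeq.trans hred
      -- delta - x = mk (q1, q2, q3)
      have hpmk : ((3 * (a:ℤ) - 2, (-2:ℤ), (-2:ℤ)) - v - ((p1:ℤ), (p2:ℤ), (p3:ℤ))) ∈ LRel a b c := hp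
      -- combine: (r + q) - (3a-2,-2,-2) ∈ LRel
      have hcomb : (((r1:ℤ), (r2:ℤ), (r3:ℤ)) + ((q1:ℤ), (q2:ℤ), (q3:ℤ))
          - (3 * (a:ℤ) - 2, (-2:ℤ), (-2:ℤ))) ∈ LRel a b c := by
        have h1 : (v - ((r1:ℤ), (r2:ℤ), (r3:ℤ))) ∈ LRel a b c := by
          rw [← mk_eq_mk]; exact hx
        have h2 : (((p1:ℤ), (p2:ℤ), (p3:ℤ)) - ((q1:ℤ), (q2:ℤ), (q3:ℤ))) ∈ LRel a b c := by
          rw [← mk_eq_mk]; exact hqred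
        have hsum := (LRel a b c).neg_mem
          ((LRel a b c).add_mem ((LRel a b c).add_mem h1 h2) hpmk)
        convert hsum using 1
        abel
      rw [mem_LRel] at hcomb
      obtain ⟨k, l, hkl⟩ := hcomb
      have e1 : (r1:ℤ) + q1 - (3 * a - 2) = k * a := by
        have := congrArg Prod.fst hkl; simpa using this
      have e2 : (r2:ℤ) + q2 + 2 = l * b - k * b := by
        have := congrArg (fun p : ℤ×ℤ×ℤ => p.2.1) hkl
        simp at this; linarith
      have e3 : (r3:ℤ) + q3 + 2 = -(l * c) := by
        have := congrArg (fun p : ℤ×ℤ×ℤ => p.2.2) hkl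
        simp at this; linarith
      have br1 : (r1:ℤ) ≤ a - 1 := by omega
      have bq1 : (q1:ℤ) ≤ a - 1 := by omega
      have br2 : (r2:ℤ) ≤ b - 1 := by omega
      have bq2 : (q2:ℤ) ≤ b - 1 := by omega
      have r10 : (0:ℤ) ≤ r1 := Int.natCast_nonneg r1
      have q10 : (0:ℤ) ≤ q1 := Int.natCast_nonneg q1
      have r20 : (0:ℤ) ≤ r2 := Int.natCast_nonneg r2
      have q20 : (0:ℤ) ≤ q2 := Int.natCast_nonneg q2
      have r30 : (0:ℤ) ≤ r3 := Int.natCast_nonneg r3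
      have q30 : (0:ℤ) ≤ q3 := Int.natCast_nonneg q3
      have hk1 : k ≤ -1 := by
        have h1 : k * a ≤ (-1) * a := by linarith
        have := le_of_mul_le_mul_right h1 ha'
        omega
      have hk2 : -2 ≤ k := by
        have h1 : (-3) * a < k * a := by linarith
        have := lt_of_mul_lt_mul_right h1 (le_of_lt ha')
        omega
      have hl1 : l ≤ -1 := by
        have h1 : l * c < 0 * c := by linarith
        have := lt_of_mul_lt_mul_right h1 (le_of_lt hc')
        omega
      have hlk : k < l := by
        have h1 : k * b < l * b := by linarith
        exact lt_of_mul_lt_mul_right h1 (le_of_lt hb')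
      have hk : k = -2 := by omega
      have hl : l = -1 := by omega
      subst hk hl
      -- so r1 ≤ a-2, r2 ≤ b-2, r3 ≤ c-2
      have hr1' : (r1:ℤ) ≤ (a:ℤ) - 2 := by linarith
      have hr2' : (r2:ℤ) ≤ (b:ℤ) - 2 := by linarith
      have hr3' : (r3:ℤ) ≤ (c:ℤ) - 2 := by linarith
      refine ⟨⟨⟨r1, by omega⟩, ⟨r2, by omega⟩, ⟨r3, by omega⟩⟩, Subtype.ext hx.symm⟩
  rw [← Nat.card_eq_of_bijective f hbij]
  simp [Nat.card_eq_fintype_card, Nat.mul_assoc]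
end
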